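/- Let H be a gadget graph for (G, f, b_1, …, b_n). Then every vertex cover of H has size at least f + m + Σ_{i=1}^n b_i. -/

import Mathlib

/-- A set `C` of vertices is a vertex cover of `G` if every edge of `G`
has at least one endpoint in `C`. -/
def IsVertexCover {V : Type*} (G : SimpleGraph V) (C : Set V) : Prop :=
  ∀ ⦃x y : V⦄, G.Adj x y → x ∈ C ∨ y ∈ C

/-- A gadget graph `H` for `(G, f, b)`.  The pieces are:
* for each vertex `i` of `G`, a cycle `cyc i` on `2 * b i` vertices, colored
  alternately blue (even position) and red (odd position), together with a pendant
  vertex `pend i` whose unique neighbor is the red cycle vertex at position `ρ i`;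
* for each edge `{i, j}` of `G`, a three-edge path
  `cyc i (β i j) — inter i j — inter j i — cyc j (β j i)` whose endpoints are blue
  cycle vertices (distinct for distinct paths) and whose internal vertices belong
  to no other piece;
* `f` disjoint copies of the path on three vertices `p3 t 0 — p3 t 1 — p3 t 2`.
These pieces are pairwise disjoint, and `H` has no further vertices or edges. -/
structure GadgetGraph {n : ℕ} (G : SimpleGraph (Fin n)) (f : ℕ) (b : Fin n → ℕ)
    {W : Type*} (H : SimpleGraph W) where
  cyc : (i : Fin n) → ZMod (2 * b i) → W
  pend : Fin n → W
  inter : (i j : Fin n) → G.Adj i j → W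
  p3 : Fin f → Fin 3 → W
  pieces_bij : Function.Bijective
    (fun x : (Σ i : Fin n, ZMod (2 * b i)) ⊕ (Fin n) ⊕
        (Σ' (i : Fin n) (j : Fin n), G.Adj i j) ⊕ (Fin f × Fin 3) =>
      match x with
      | .inl ⟨i, t⟩ => cyc i t
      | .inr (.inl i) => pend i
      | .inr (.inr (.inl ⟨i, j, h⟩)) => inter i j h
      | .inr (.inr (.inr (t, k))) => p3 t k)
  ρ : (i : Fin n) → ZMod (2 * b i)
  ρ_odd : ∀ i, Odd ((ρ i).val)
  β : (i j : Fin n) → G.Adj i j → ZMod (2 * b i)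
  β_even : ∀ i j h, Even ((β i j h).val)
  β_inj : ∀ i j j' (h : G.Adj i j) (h' : G.Adj i j'), β i j h = β i j' h' → j = j'
  adj_iff : ∀ x y : W, H.Adj x y ↔
    ((∃ i t, (x = cyc i t ∧ y = cyc i (t + 1)) ∨ (y = cyc i t ∧ x = cyc i (t + 1))) ∨
     (∃ i, (x = pend i ∧ y = cyc i (ρ i)) ∨ (y = pend i ∧ x = cyc i (ρ i))) ∨
     (∃ i j h, (x = cyc i (β i j h) ∧ y = inter i j h) ∨
               (y = cyc i (β i j h) ∧ x = inter i j h)) ∨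
     (∃ i j h, x = inter i j h ∧ y = inter j i (G.adj_symm h)) ∨
     (∃ t, (x = p3 t 0 ∧ y = p3 t 1) ∨ (y = p3 t 0 ∧ x = p3 t 1) ∨
           (x = p3 t 1 ∧ y = p3 t 2) ∨ (y = p3 t 1 ∧ x = p3 t 2)))

/-!
A vertex cover contains an endpoint of every edge of a matching, and these endpoints are
distinct, so it is at least as large as the matching. A gadget graph contains a matching of
size `f + m + ∑ i, b i`: the first edge of each copy of the path on three vertices, the middle
edge of each path `P_ij`, and the `b i` edges `{2k, 2k + 1}` of each cycle `C^i`.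
-/

/-- `π` witnesses that the edges `{u a, v a}` form a matching: it sends both endpoints of the
`a`-th edge back to `a`. -/
theorem IsVertexCover.natCard_le_ncard {V ι : Type*} {G : SimpleGraph V} {C : Set V}
    (hC : IsVertexCover G C) (hfin : C.Finite) (u v : ι → V)
    (hadj : ∀ a, G.Adj (u a) (v a)) (π : V → Option ι)
    (hu : ∀ a, π (u a) = some a) (hv : ∀ a, π (v a) = some a) :
    Nat.card ι ≤ C.ncard := by
  have : Finite C := hfin
  have hcovered (a : ι) : ∃ x ∈ C, π x = some a := by
    rcases hC (hadj a) with h | h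
    exacts [⟨_, h, hu a⟩, ⟨_, h, hv a⟩]
  choose g hgC hgπ using hcovered
  rw [← Nat.card_coe_set_eq]
  refine Nat.card_le_card_of_injective (fun a => ⟨g a, hgC a⟩) fun a a' h => ?_
  simpa [hgπ] using congrArg (π ∘ Subtype.val) h

theorem SimpleGraph.adj_out_of_mem_edgeSet {V : Type*} {G : SimpleGraph V} {e : Sym2 V}
    (he : e ∈ G.edgeSet) : G.Adj e.out.1 e.out.2 := by
  rwa [← SimpleGraph.mem_edgeSet, Sym2.mk, Quot.out_eq]

namespace GadgetGraph

variable {n : ℕ} {G : SimpleGraph (Fin n)} {f : ℕ} {b : Fin n → ℕ} {W : Type*}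
  {H : SimpleGraph W}

variable (G f b)

abbrev Piece : Type :=
  (Σ i : Fin n, ZMod (2 * b i)) ⊕ Fin n ⊕ (Σ' (i : Fin n) (j : Fin n), G.Adj i j) ⊕
    (Fin f × Fin 3)

abbrev MatchingIndex : Type :=
  Fin f ⊕ G.edgeSet ⊕ (Σ i : Fin n, Fin (b i))

theorem natCard_matchingIndex [DecidableRel G.Adj] :
    Nat.card (MatchingIndex G f b) = f + G.edgeFinset.card + ∑ i, b i := by
  simp [SimpleGraph.edgeFinset_card, add_assoc]

def matchingBlock : Piece G f b → Option (MatchingIndex G f b)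
  | .inl ⟨i, t⟩ =>
    if h : t.val / 2 < b i then some (.inr (.inr ⟨i, ⟨t.val / 2, h⟩⟩)) else none
  | .inr (.inl _) => none
  | .inr (.inr (.inl ⟨i, j, h⟩)) => some (.inr (.inl ⟨s(i, j), h⟩))
  | .inr (.inr (.inr (t, _))) => some (.inl t)

variable {G f b}

theorem matchingBlock_cyc (i : Fin n) (k : Fin (b i)) {c : ℕ} (hc : c < 2) :
    matchingBlock G f b (.inl ⟨i, ((2 * k + c : ℕ) : ZMod (2 * b i))⟩) =
      some (.inr (.inr ⟨i, k⟩)) := by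
  have hval : ((2 * k + c : ℕ) : ZMod (2 * b i)).val = 2 * k + c :=
    ZMod.val_cast_of_lt (by omega)
  have hdiv : (2 * k + c) / 2 = k := by omega
  simp only [matchingBlock, hval, hdiv, k.isLt, dite_true]

noncomputable def pieceEquiv (gg : GadgetGraph G f b H) : Piece G f b ≃ W :=
  Equiv.ofBijective _ gg.pieces_bij

theorem finite (gg : GadgetGraph G f b H) (hb : ∀ i, b i ≠ 0) : Finite W := by
  have (i : Fin n) : NeZero (2 * b i) := ⟨by simp [hb i]⟩
  have : Finite (Σ' (i : Fin n) (j : Fin n), G.Adj i j) :=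
    Finite.of_injective (fun x => (x.1, x.2.1)) <| by
      rintro ⟨i, j, h⟩ ⟨i', j', h'⟩ ⟨⟩
      rfl
  exact Finite.of_equiv _ gg.pieceEquiv

section

variable (gg : GadgetGraph G f b H)

@[simp]
theorem pieceEquiv_symm_cyc (i : Fin n) (t : ZMod (2 * b i)) :
    gg.pieceEquiv.symm (gg.cyc i t) = .inl ⟨i, t⟩ :=
  gg.pieceEquiv.symm_apply_apply (.inl ⟨i, t⟩)

@[simp]
theorem pieceEquiv_symm_inter (i j : Fin n) (h : G.Adj i j) :
    gg.pieceEquiv.symm (gg.inter i j h) = .inr (.inr (.inl ⟨i, j, h⟩)) :=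
  gg.pieceEquiv.symm_apply_apply (.inr (.inr (.inl ⟨i, j, h⟩)))

@[simp]
theorem pieceEquiv_symm_p3 (t : Fin f) (k : Fin 3) :
    gg.pieceEquiv.symm (gg.p3 t k) = .inr (.inr (.inr (t, k))) :=
  gg.pieceEquiv.symm_apply_apply (.inr (.inr (.inr (t, k))))

theorem adj_cyc_add_one (i : Fin n) (t : ZMod (2 * b i)) :
    H.Adj (gg.cyc i t) (gg.cyc i (t + 1)) :=
  (gg.adj_iff _ _).2 <| .inl ⟨i, t, .inl ⟨rfl, rfl⟩⟩

theorem adj_inter (i j : Fin n) (h : G.Adj i j) :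
    H.Adj (gg.inter i j h) (gg.inter j i h.symm) :=
  (gg.adj_iff _ _).2 <| .inr <| .inr <| .inr <| .inl ⟨i, j, h, rfl, rfl⟩

theorem adj_p3 (t : Fin f) : H.Adj (gg.p3 t 0) (gg.p3 t 1) :=
  (gg.adj_iff _ _).2 <| .inr <| .inr <| .inr <| .inr ⟨t, .inl ⟨rfl, rfl⟩⟩

noncomputable def matchingLeft : MatchingIndex G f b → W
  | .inl t => gg.p3 t 0
  | .inr (.inl e) => gg.inter _ _ (SimpleGraph.adj_out_of_mem_edgeSet e.2)
  | .inr (.inr ⟨i, k⟩) => gg.cyc i ((2 * k : ℕ) : ZMod (2 * b i))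

noncomputable def matchingRight : MatchingIndex G f b → W
  | .inl t => gg.p3 t 1
  | .inr (.inl e) => gg.inter _ _ (SimpleGraph.adj_out_of_mem_edgeSet e.2).symm
  | .inr (.inr ⟨i, k⟩) => gg.cyc i ((2 * k + 1 : ℕ) : ZMod (2 * b i))

theorem adj_matchingLeft_matchingRight (a : MatchingIndex G f b) :
    H.Adj (gg.matchingLeft a) (gg.matchingRight a) := by
  rcases a with t | e | ⟨i, k⟩
  · exact gg.adj_p3 t
  · exact gg.adj_inter _ _ _
  · simpa [matchingLeft, matchingRight] using gg.adj_cyc_add_one i (2 * k : ℕ)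

theorem matchingBlock_symm_matchingLeft (a : MatchingIndex G f b) :
    matchingBlock G f b (gg.pieceEquiv.symm (gg.matchingLeft a)) = some a := by
  rcases a with t | e | ⟨i, k⟩
  · simp [matchingLeft, matchingBlock]
  · simp [matchingLeft, matchingBlock, Sym2.mk, Quot.out_eq]
  · simpa [matchingLeft] using matchingBlock_cyc (f := f) (G := G) i k two_pos

theorem matchingBlock_symm_matchingRight (a : MatchingIndex G f b) :
    matchingBlock G f b (gg.pieceEquiv.symm (gg.matchingRight a)) = some a := by
  rcases a with t | e | ⟨i, k⟩
  · simp [matchingRight, matchingBlock]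
  · simp [matchingRight, matchingBlock, Sym2.eq_swap (a := (e : Sym2 (Fin n)).out.2), Sym2.mk,
      Quot.out_eq]
  · simpa [matchingRight] using matchingBlock_cyc (f := f) (G := G) i k one_lt_two

end

theorem natCard_matchingIndex_le_ncard (gg : GadgetGraph G f b H) {S : Set W}
    (hS : IsVertexCover H S) (hfin : S.Finite) :
    Nat.card (MatchingIndex G f b) ≤ S.ncard :=
  hS.natCard_le_ncard hfin gg.matchingLeft gg.matchingRight gg.adj_matchingLeft_matchingRight
    (matchingBlock G f b ∘ gg.pieceEquiv.symm) gg.matchingBlock_symm_matchingLeft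
    gg.matchingBlock_symm_matchingRight

end GadgetGraph

theorem stmt1_general {n : ℕ} (G : SimpleGraph (Fin n)) [DecidableRel G.Adj]
    (f : ℕ) (b : Fin n → ℕ) {W : Type*} (H : SimpleGraph W)
    (hb2 : ∀ i, 2 ≤ b i)
    (gg : GadgetGraph G f b H)
    (S : Set W) (hS : IsVertexCover H S) :
    f + G.edgeFinset.card + ∑ i, b i ≤ S.ncard := by
  have : Finite W := gg.finite fun i => (two_pos.trans_le (hb2 i)).ne'
  rw [← GadgetGraph.natCard_matchingIndex]
  exact gg.natCard_matchingIndex_le_ncard hS S.toFinite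

/-- Every vertex cover of a gadget graph `H` for `(G, f, b)`
has size at least `f + m + ∑ i, b i`. -/
theorem stmt1 {n : ℕ} (G : SimpleGraph (Fin n)) [DecidableRel G.Adj]
    (f : ℕ) (b : Fin n → ℕ) {W : Type*} (H : SimpleGraph W)
    (hniso : ∀ i : Fin n, ∃ j, G.Adj i j)
    (hb2 : ∀ i, 2 ≤ b i)
    (hbdeg : ∀ i, b i = G.degree i ∨ b i = G.degree i + 1 ∨ b i = G.degree i + 2)
    (gg : GadgetGraph G f b H)
    (S : Set W) (hS : IsVertexCover H S) :
    f + G.edgeFinset.card + ∑ i, b i ≤ S.ncard :=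
  stmt1_general G f b H hb2 gg S hS
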